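/- Let Q be an N×N real positive definite matrix, let A be an N×N real matrix, let C be an M×N real matrix of rank M with M ≤ N, and let 0 < p ≤ 1. Then for every N×M real matrix K̃: p·(A − K̃C) Q (A − K̃C)ᵀ + (1−p)·A Q Aᵀ ≥ A Q Aᵀ − p·A Q Cᵀ (C Q Cᵀ)^{-1} C Q Aᵀ in the Loewner order, with equality when K̃ = A Q Cᵀ (C Q Cᵀ)^{-1}. In particular, K̃* = A Q Cᵀ (C Q Cᵀ)^{-1} minimizes the trace of the left-hand side over all K̃. -/

import Mathlib

open Matrix

/-!
Completing the square: with `S = C Q Cᵀ` and `G = A Q Cᵀ S⁻¹`,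
`(A - K C) Q (A - K C)ᵀ = A Q Aᵀ - G S Gᵀ + (K - G) S (K - G)ᵀ`.
Since `C` has full row rank, `S` is positive definite, so the last term is positive semidefinite
and vanishes at `K = G`; averaging with weight `p ≥ 0` preserves this.
-/

namespace Matrix

variable {l m n R : Type*} [Fintype m] [Fintype n]

lemma vecMul_injective_of_rank_eq_card {K : Type*} [Field K] {C : Matrix m n K}
    (hC : C.rank = Fintype.card m) : Function.Injective C.vecMul := by
  refine vecMul_injective_iff.mpr (linearIndependent_iff_card_eq_finrank_span.mpr ?_)
  rw [Set.finrank, ← rank_eq_finrank_span_row, hC]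

lemma posDef_mul_mul_transpose_of_rank_eq_card {Q : Matrix n n ℝ} (hQ : Q.PosDef)
    {C : Matrix m n ℝ} (hC : C.rank = Fintype.card m) : (C * Q * Cᵀ).PosDef := by
  simpa using hQ.mul_mul_conjTranspose_same (vecMul_injective_of_rank_eq_card hC)

section Gain

variable [DecidableEq m] [CommRing R]

noncomputable def optimalGain (A : Matrix l n R) (Q : Matrix n n R) (C : Matrix m n R) :
    Matrix l m R :=
  A * Q * Cᵀ * (C * Q * Cᵀ)⁻¹

lemma mul_mul_transpose_sub_mul_eq {A : Matrix l n R} {Q : Matrix n n R} {C : Matrix m n R}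
    (hQ : Qᵀ = Q) (hS : IsUnit (C * Q * Cᵀ).det) (K : Matrix l m R) :
    (A - K * C) * Q * (A - K * C)ᵀ =
      A * Q * Aᵀ - A * Q * Cᵀ * (C * Q * Cᵀ)⁻¹ * (C * Q * Aᵀ) +
        (K - optimalGain A Q C) * (C * Q * Cᵀ) * (K - optimalGain A Q C)ᵀ := by
  set S := C * Q * Cᵀ
  set G := optimalGain A Q C
  have hSt : Sᵀ = S := by simp [S, hQ, Matrix.mul_assoc]
  have hGS : G * S = A * Q * Cᵀ := by
    show A * Q * Cᵀ * S⁻¹ * S = _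
    rw [Matrix.mul_assoc, nonsing_inv_mul _ hS, Matrix.mul_one]
  have hSG : S * Gᵀ = C * Q * Aᵀ := by
    rw [← hSt, ← transpose_mul, hGS]; simp [hQ, Matrix.mul_assoc]
  have hGSG : G * S * Gᵀ = A * Q * Cᵀ * S⁻¹ * (C * Q * Aᵀ) := by
    rw [Matrix.mul_assoc, hSG]; rfl
  simp only [transpose_sub, transpose_mul, Matrix.sub_mul, Matrix.mul_sub, ← hGSG]
  rw [Matrix.mul_assoc K S Gᵀ, hSG, hGS]
  simp only [S, Matrix.mul_assoc]
  abel

lemma weighted_mul_mul_transpose_sub_mul_eq {A : Matrix l n R}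
    {Q : Matrix n n R} {C : Matrix m n R} (hQ : Qᵀ = Q) (hS : IsUnit (C * Q * Cᵀ).det) (p : R)
    (K : Matrix l m R) :
    p • ((A - K * C) * Q * (A - K * C)ᵀ) + (1 - p) • (A * Q * Aᵀ) =
      A * Q * Aᵀ - p • (A * Q * Cᵀ * (C * Q * Cᵀ)⁻¹ * (C * Q * Aᵀ)) +
        p • ((K - optimalGain A Q C) * (C * Q * Cᵀ) * (K - optimalGain A Q C)ᵀ) := by
  rw [mul_mul_transpose_sub_mul_eq hQ hS]
  module

end Gain

end Matrix

theorem optimal_gain_loewner_general {N M : ℕ}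
    (Q A : Matrix (Fin N) (Fin N) ℝ) (C : Matrix (Fin M) (Fin N) ℝ) (p : ℝ)
    (hQ : Q.PosDef) (hC : C.rank = M)
    (hp0 : 0 < p) :
    (∀ Kt : Matrix (Fin N) (Fin M) ℝ,
      (p • ((A - Kt * C) * Q * (A - Kt * C)ᵀ) + (1 - p) • (A * Q * Aᵀ) -
        (A * Q * Aᵀ - p • (A * Q * Cᵀ * (C * Q * Cᵀ)⁻¹ * (C * Q * Aᵀ)))).PosSemidef) ∧
    (p • ((A - A * Q * Cᵀ * (C * Q * Cᵀ)⁻¹ * C) * Q * (A - A * Q * Cᵀ * (C * Q * Cᵀ)⁻¹ * C)ᵀ) +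
        (1 - p) • (A * Q * Aᵀ) =
      A * Q * Aᵀ - p • (A * Q * Cᵀ * (C * Q * Cᵀ)⁻¹ * (C * Q * Aᵀ))) ∧
    (∀ Kt : Matrix (Fin N) (Fin M) ℝ,
      (p • ((A - A * Q * Cᵀ * (C * Q * Cᵀ)⁻¹ * C) * Q *
            (A - A * Q * Cᵀ * (C * Q * Cᵀ)⁻¹ * C)ᵀ) +
          (1 - p) • (A * Q * Aᵀ)).trace ≤
        (p • ((A - Kt * C) * Q * (A - Kt * C)ᵀ) + (1 - p) • (A * Q * Aᵀ)).trace) := by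
  have hS : (C * Q * Cᵀ).PosDef := posDef_mul_mul_transpose_of_rank_eq_card hQ (by simpa using hC)
  have hcost := weighted_mul_mul_transpose_sub_mul_eq (A := A) (by simpa using hQ.isHermitian.eq)
    hS.det_pos.ne'.isUnit p
  have hgap : ∀ K : Matrix (Fin N) (Fin M) ℝ, (p • ((K - optimalGain A Q C) * (C * Q * Cᵀ) *
      (K - optimalGain A Q C)ᵀ)).PosSemidef := fun K =>
    PosSemidef.smul (by simpa only [conjTranspose_eq_transpose_of_trivial] using
      hS.posSemidef.mul_mul_conjTranspose_same _) hp0.le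
  have hopt := hcost (optimalGain A Q C)
  rw [sub_self, Matrix.zero_mul, Matrix.zero_mul, smul_zero, add_zero] at hopt
  refine ⟨fun K => ?_, hopt, fun K => ?_⟩
  · rw [hcost K, add_sub_cancel_left]
    exact hgap K
  · rw [optimalGain] at hopt
    rw [hopt, hcost K, trace_add]
    linarith [(hgap K).trace_nonneg]

/-- For every gain `K̃`,
`p·(A−K̃C) Q (A−K̃C)ᵀ + (1−p)·A Q Aᵀ ≥ A Q Aᵀ − p·A Q Cᵀ(C Q Cᵀ)⁻¹ C Q Aᵀ`,
with equality at `K̃* = A Q Cᵀ (C Q Cᵀ)⁻¹`; in particular `K̃*` minimizes the trace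
of the left-hand side. -/
theorem optimal_gain_loewner {N M : ℕ}
    (Q A : Matrix (Fin N) (Fin N) ℝ) (C : Matrix (Fin M) (Fin N) ℝ) (p : ℝ)
    (hQ : Q.PosDef) (hMN : M ≤ N) (hC : C.rank = M)
    (hp0 : 0 < p) (hp1 : p ≤ 1) :
    (∀ Kt : Matrix (Fin N) (Fin M) ℝ,
      (p • ((A - Kt * C) * Q * (A - Kt * C)ᵀ) + (1 - p) • (A * Q * Aᵀ) -
        (A * Q * Aᵀ - p • (A * Q * Cᵀ * (C * Q * Cᵀ)⁻¹ * (C * Q * Aᵀ)))).PosSemidef) ∧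
    (p • ((A - A * Q * Cᵀ * (C * Q * Cᵀ)⁻¹ * C) * Q * (A - A * Q * Cᵀ * (C * Q * Cᵀ)⁻¹ * C)ᵀ) +
        (1 - p) • (A * Q * Aᵀ) =
      A * Q * Aᵀ - p • (A * Q * Cᵀ * (C * Q * Cᵀ)⁻¹ * (C * Q * Aᵀ))) ∧
    (∀ Kt : Matrix (Fin N) (Fin M) ℝ,
      (p • ((A - A * Q * Cᵀ * (C * Q * Cᵀ)⁻¹ * C) * Q *
            (A - A * Q * Cᵀ * (C * Q * Cᵀ)⁻¹ * C)ᵀ) +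
          (1 - p) • (A * Q * Aᵀ)).trace ≤
        (p • ((A - Kt * C) * Q * (A - Kt * C)ᵀ) + (1 - p) • (A * Q * Aᵀ)).trace) :=
  optimal_gain_loewner_general Q A C p hQ hC hp0
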